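/- Let G be an abelian group and S a finite 2-separable generating subset with 0 ∈ S. Let H be a subgroup of G which is a 2-fragment of S, let φ : G → G/H be the canonical morphism, and let K be a subgroup of G/H which is a 1-fragment of φ(S). Then φ⁻¹(K) is a 2-fragment of S. -/

import Mathlib

open scoped Pointwise Classical

/-- The `k`-th connectivity `κ_k(S)`: minimum of `|X + S| - |X|` over finite `X`
with `|X| ≥ k` and `|X + S| ≤ |G| - k`, with `min ∅ = |G| - 2k + 1`. -/
noncomputable def kappa {G : Type*} [AddCommGroup G] [DecidableEq G]
    (k : ℕ) (S : Finset G) : ℕ :=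
  if ∃ X : Finset G, k ≤ X.card ∧ (X + S).card ≤ Nat.card G - k then
    sInf {d : ℕ | ∃ X : Finset G, k ≤ X.card ∧ (X + S).card ≤ Nat.card G - k ∧
      d = (X + S).card - X.card}
  else Nat.card G - 2 * k + 1

/-- `S` is `k`-separable: some `X` has `|X| ≥ k` and `|G \ (X + S)| ≥ k`. -/
def KSeparable {G : Type*} [AddCommGroup G] [DecidableEq G] (k : ℕ) (S : Finset G) : Prop :=
  ∃ X : Finset G, k ≤ X.card ∧ (X + S).card ≤ Nat.card G - k

/-- `X` is a `k`-fragment of `S`: `|X| ≥ k`, `|G \ (X + S)| ≥ k` and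
`|X + S| - |X| = κ_k(S)`. -/
def IsFragment {G : Type*} [AddCommGroup G] [DecidableEq G] (k : ℕ) (S X : Finset G) : Prop :=
  k ≤ X.card ∧ (X + S).card ≤ Nat.card G - k ∧ (X + S).card - X.card = kappa k S

/-- A hyper-atom of `S` is a subgroup of maximal cardinality which is a `1`-fragment. -/
def IsHyperAtom {G : Type*} [AddCommGroup G] [DecidableEq G]
    (S : Finset G) (H : AddSubgroup G) : Prop :=
  (∃ HF : Finset G, (HF : Set G) = (H : Set G) ∧ IsFragment 1 S HF) ∧
  ∀ (K : AddSubgroup G) (KF : Finset G), (KF : Set G) = (K : Set G) →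
    IsFragment 1 S KF → Nat.card K ≤ Nat.card H

/-!
Write `φ : G → G ⧸ H` and `h = |H|`. Every preimage `φ⁻¹(B)` has `h |B|` elements and satisfies
`φ⁻¹(B) + S = φ⁻¹(B + φ(S))`. Taking `B = {0}` gives `κ₂(S) = |H + S| - |H| = h (|φ(S)| - 1)`,
and taking `B = K` gives `|P + S| - |P| = h κ₁(φ(S))` for `P = φ⁻¹(K)`. Since `{0}` is
admissible in `G ⧸ H`, `κ₁(φ(S)) ≤ |φ(S)| - 1`, so `|P + S| - |P| ≤ κ₂(S)`; as `P` is itself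
admissible for `κ₂(S)`, equality holds.
-/

open QuotientAddGroup

section Connectivity

variable {G : Type*} [AddCommGroup G] [DecidableEq G]

lemma kappa_le_of_admissible {k : ℕ} {S X : Finset G} (hX : k ≤ X.card)
    (hXS : (X + S).card ≤ Nat.card G - k) : kappa k S ≤ (X + S).card - X.card := by
  rw [kappa, if_pos ⟨X, hX, hXS⟩]
  exact Nat.sInf_le ⟨X, hX, hXS, rfl⟩

lemma isFragment_of_admissible_of_le_kappa {k : ℕ} {S X : Finset G} (hX : k ≤ X.card)
    (hXS : (X + S).card ≤ Nat.card G - k) (hle : (X + S).card - X.card ≤ kappa k S) :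
    IsFragment k S X :=
  ⟨hX, hXS, le_antisymm hle (kappa_le_of_admissible hX hXS)⟩

lemma kappa_one_le_card_sub_one {S : Finset G} (hS : S.card ≤ Nat.card G - 1) :
    kappa 1 S ≤ S.card - 1 := by
  have h0 : (0 : Finset G).card = 1 := Finset.card_singleton 0
  simpa [h0] using kappa_le_of_admissible (S := S) h0.ge (by rwa [zero_add])

end Connectivity

section Quotient

variable {G : Type*} [AddCommGroup G] (H : AddSubgroup G)

lemma coe_eq_preimage_mk'_zero : (H : Set G) = mk' H ⁻¹' {0} := by
  ext x
  exact (eq_zero_iff x).symm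

lemma preimage_mk'_add (U : Set (G ⧸ H)) (T : Set G) :
    mk' H ⁻¹' U + T = mk' H ⁻¹' (U + mk' H '' T) := by
  ext x
  simp only [Set.mem_add, Set.mem_preimage, Set.mem_image]
  constructor
  · rintro ⟨u, hu, s, hs, rfl⟩
    exact ⟨mk' H u, hu, mk' H s, ⟨s, hs, rfl⟩, (map_add _ u s).symm⟩
  · rintro ⟨u, hu, _, ⟨s, hs, rfl⟩, hx⟩
    refine ⟨x - s, ?_, s, hs, sub_add_cancel x s⟩
    rwa [map_sub, ← hx, add_sub_cancel_right]

variable {H}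

lemma card_eq_card_mul_card_of_coe_eq_preimage {A : Finset G} {B : Finset (G ⧸ H)}
    (hAB : (A : Set G) = mk' H ⁻¹' B) : A.card = Nat.card H * B.card := by
  rw [← Nat.card_eq_finsetCard, ← Nat.card_eq_finsetCard, ← Finset.coe_sort_coe,
    ← Finset.coe_sort_coe, hAB, coe_mk', Nat.card_congr (preimageMkEquivAddSubgroupProdSet H B), Nat.card_prod]

lemma card_add_eq_card_mul_card_add_image [DecidableEq G] {A S : Finset G} {B : Finset (G ⧸ H)}
    (hAB : (A : Set G) = mk' H ⁻¹' B) :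
    (A + S).card = Nat.card H * (B + S.image (mk' H)).card := by
  refine card_eq_card_mul_card_of_coe_eq_preimage ?_
  rw [Finset.coe_add, hAB, preimage_mk'_add, Finset.coe_add, Finset.coe_image]

lemma card_eq_of_coe_eq_addSubgroup {A : Finset G} (hA : (A : Set G) = H) :
    A.card = Nat.card H := by
  rw [← Nat.card_eq_finsetCard, ← Finset.coe_sort_coe, hA]
  rfl

lemma card_add_eq_of_coe_eq_addSubgroup [DecidableEq G] {A S : Finset G} (hA : (A : Set G) = H) :
    (A + S).card = Nat.card H * (S.image (mk' H)).card := by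
  refine card_eq_card_mul_card_of_coe_eq_preimage ?_
  rw [Finset.coe_add, hA, coe_eq_preimage_mk'_zero, preimage_mk'_add, Set.singleton_zero, zero_add,
    Finset.coe_image]

end Quotient

theorem stmt12_general {G : Type*} [AddCommGroup G] [Fintype G] [DecidableEq G] (S : Finset G)
    (H : AddSubgroup G) (HF : Finset G) (hHF : (HF : Set G) = (H : Set G))
    (hfrag : IsFragment 2 S HF)
    (K : AddSubgroup (G ⧸ H)) (KF : Finset (G ⧸ H)) (hKF : (KF : Set (G ⧸ H)) = (K : Set (G ⧸ H)))
    (hKfrag : IsFragment 1 (S.image (QuotientAddGroup.mk' H)) KF)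
    (PF : Finset G) (hPF : (PF : Set G) = (QuotientAddGroup.mk' H) ⁻¹' (K : Set (G ⧸ H))) :
    IsFragment 2 S PF := by
  obtain ⟨hH2, hHS, hκ₂⟩ := hfrag
  obtain ⟨hK1, hKS, hκ₁⟩ := hKfrag
  rw [card_eq_of_coe_eq_addSubgroup hHF] at hH2 hκ₂
  rw [card_add_eq_of_coe_eq_addSubgroup hHF] at hHS hκ₂
  set h := Nat.card H
  set φS := S.image (mk' H)
  have hP : (PF : Set G) = mk' H ⁻¹' KF := by rw [hPF, hKF]
  have hG : Nat.card G = h * Nat.card (G ⧸ H) := by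
    rw [AddSubgroup.card_eq_card_quotient_mul_card_addSubgroup H, mul_comm]
  rw [hG] at hHS
  have hφS : φS.card ≤ Nat.card (G ⧸ H) - 1 := by
    have : 0 < h * Nat.card (G ⧸ H) := Nat.mul_pos (by omega) Nat.card_pos
    exact Nat.le_sub_one_of_lt (Nat.lt_of_mul_lt_mul_left (a := h) (by omega))
  refine isFragment_of_admissible_of_le_kappa ?_ ?_ ?_
  · rw [card_eq_card_mul_card_of_coe_eq_preimage hP]
    exact le_mul_of_le_of_one_le hH2 hK1
  · rw [card_add_eq_card_mul_card_add_image hP, hG]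
    calc h * (KF + φS).card ≤ h * (Nat.card (G ⧸ H) - 1) := Nat.mul_le_mul_left h hKS
      _ ≤ h * Nat.card (G ⧸ H) - 2 := by rw [Nat.mul_sub_one]; omega
  · calc (PF + S).card - PF.card = h * kappa 1 φS := by
          rw [card_add_eq_card_mul_card_add_image hP, card_eq_card_mul_card_of_coe_eq_preimage hP,
            ← Nat.mul_sub, hκ₁]
      _ ≤ h * (φS.card - 1) := Nat.mul_le_mul_left _ (kappa_one_le_card_sub_one hφS)
      _ = kappa 2 S := by rw [Nat.mul_sub_one, hκ₂]

theorem stmt12 {G : Type*} [AddCommGroup G] [Fintype G] [DecidableEq G] (S : Finset G)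
    (hgen : AddSubgroup.closure (S : Set G) = ⊤) (h0S : (0 : G) ∈ S)
    (hsep : KSeparable 2 S)
    (H : AddSubgroup G) (HF : Finset G) (hHF : (HF : Set G) = (H : Set G))
    (hfrag : IsFragment 2 S HF)
    (K : AddSubgroup (G ⧸ H)) (KF : Finset (G ⧸ H)) (hKF : (KF : Set (G ⧸ H)) = (K : Set (G ⧸ H)))
    (hKfrag : IsFragment 1 (S.image (QuotientAddGroup.mk' H)) KF)
    (PF : Finset G) (hPF : (PF : Set G) = (QuotientAddGroup.mk' H) ⁻¹' (K : Set (G ⧸ H))) :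
    IsFragment 2 S PF :=
  stmt12_general S H HF hHF hfrag K KF hKF hKfrag PF hPF
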